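/- The polar of the set D(V) = {f Hermitian | f ≥ 0, ‖f‖ ≤ 1} equals P(V) = {g Hermitian | g ≥ 0, tr(g) ≤ 1}. -/

import Mathlib

open scoped ComplexOrder Matrix.Norms.L2Operator

def polar {n : ℕ} (C : Set (Matrix (Fin n) (Fin n) ℂ)) : Set (Matrix (Fin n) (Fin n) ℂ) :=
  {g | g.IsHermitian ∧ ∀ f ∈ C, 0 ≤ (f * g).trace ∧ (f * g).trace ≤ 1}

/-- The canonical QCS `D(V)`: positive semidefinite matrices of operator norm at most 1. -/
noncomputable def ballD (n : ℕ) : Set (Matrix (Fin n) (Fin n) ℂ) :=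
  {f | f.PosSemidef ∧ ‖f‖ ≤ 1}

/-- The canonical QCS `P(V)`: positive semidefinite matrices of trace at most 1. -/
def ballP (n : ℕ) : Set (Matrix (Fin n) (Fin n) ℂ) :=
  {f | f.PosSemidef ∧ f.trace ≤ 1}

/-!
For positive semidefinite `f`, `g` one has `0 ≤ tr (f g)` (write it as `tr (√f g √f)`), and in the
C⋆-algebra of matrices `‖f‖ ≤ 1` means `f ≤ 1`, so `tr (f g) ≤ tr g`; hence `P(V)` lies in the
polar. Conversely, testing a Hermitian `g` of the polar against `1 ∈ D(V)` bounds its trace, and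
testing it against the rank-one projections onto its unit eigenvectors, which lie in `D(V)`, shows
that its eigenvalues are nonnegative.
-/

open scoped MatrixOrder

namespace Matrix

variable {𝕜 ι : Type*} [RCLike 𝕜] [Fintype ι]

theorem PosSemidef.trace_mul_nonneg [DecidableEq ι] {A B : Matrix ι ι 𝕜} (hA : A.PosSemidef)
    (hB : B.PosSemidef) : 0 ≤ (A * B).trace := by
  set S := CFC.sqrt A
  have hS : Sᴴ = S := (nonneg_iff_posSemidef.mp (CFC.sqrt_nonneg A)).isHermitian
  have hSBS : (S * B * Sᴴ).PosSemidef := hB.mul_mul_conjTranspose_same S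
  calc 0 ≤ (S * B * Sᴴ).trace := hSBS.trace_nonneg
    _ = (A * B).trace := by
      rw [hS, trace_mul_comm, ← mul_assoc, CFC.sqrt_mul_sqrt_self A hA.nonneg]

theorem trace_vecMulVec_star_mul (v : ι → 𝕜) (B : Matrix ι ι 𝕜) :
    (vecMulVec v (star v) * B).trace = star v ⬝ᵥ (B *ᵥ v) := by
  rw [vecMulVec_mul, trace_vecMulVec, dotProduct_comm, dotProduct_mulVec]

theorem isStarProjection_vecMulVec_star {v : ι → 𝕜} (hv : star v ⬝ᵥ v = 1) :
    IsStarProjection (vecMulVec v (star v)) :=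
  ⟨by rw [IsIdempotentElem, vecMulVec_mul_vecMulVec, hv, one_smul],
    (posSemidef_vecMulVec_self_star v).isHermitian⟩

theorem PosSemidef.trace_mul_le_trace_of_norm_le_one [DecidableEq ι] {A B : Matrix ι ι ℂ}
    (hA : A.PosSemidef) (hA₁ : ‖A‖ ≤ 1) (hB : B.PosSemidef) :
    (A * B).trace ≤ B.trace := by
  have h : (1 - A).PosSemidef :=
    (CStarAlgebra.norm_le_one_iff_of_nonneg A hA.nonneg).mp hA₁
  simpa [sub_mul, trace_sub] using h.trace_mul_nonneg hB

theorem IsHermitian.posSemidef_of_forall_trace_mul_nonneg [DecidableEq ι] {B : Matrix ι ι 𝕜}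
    (hB : B.IsHermitian)
    (h : ∀ A : Matrix ι ι 𝕜, A.PosSemidef → ‖A‖ ≤ 1 → 0 ≤ (A * B).trace) : B.PosSemidef := by
  refine hB.posSemidef_iff_eigenvalues_nonneg.mpr fun i => ?_
  set v : ι → 𝕜 := ⇑(hB.eigenvectorBasis i)
  have hv : star v ⬝ᵥ v = 1 := by
    rw [dotProduct_comm, ← EuclideanSpace.inner_eq_star_dotProduct, inner_self_eq_norm_sq_to_K,
      hB.eigenvectorBasis.orthonormal.1 i]
    simp
  have hvBv : 0 ≤ star v ⬝ᵥ (B *ᵥ v) := by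
    rw [← trace_vecMulVec_star_mul]
    exact h _ (posSemidef_vecMulVec_self_star v) (isStarProjection_vecMulVec_star hv).norm_le
  rw [hB.eigenvalues_eq]
  exact (RCLike.nonneg_iff.mp hvBv).1

end Matrix

/-- The polar of D(V) equals P(V). -/
theorem polar_ballD_eq_ballP (n : ℕ) : polar (ballD n) = ballP n := by
  ext g
  constructor
  · rintro ⟨hg, hpol⟩
    have hone : (1 : Matrix (Fin n) (Fin n) ℂ) ∈ ballD n :=
      ⟨.one, (IsStarProjection.one _).norm_le⟩
    exact ⟨hg.posSemidef_of_forall_trace_mul_nonneg fun f hf hf₁ => (hpol f ⟨hf, hf₁⟩).1,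
      by simpa using (hpol 1 hone).2⟩
  · rintro ⟨hg, htr⟩
    exact ⟨hg.isHermitian, fun f ⟨hf, hf₁⟩ =>
      ⟨hf.trace_mul_nonneg hg, (hf.trace_mul_le_trace_of_norm_le_one hf₁ hg).trans htr⟩⟩
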